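/- arXiv:math/0505277 — 2 statements merged into one kernel-verified Lean document; each statement's English description precedes it below -/
import Mathlib

section
/- Let n ≥ 3. There exists a constant D₁ = D₁(n) > 0 such that for every x₀ ∈ S^{n−1}, every ε ∈ (0,1), and every x ∈ S^{n−1}, one has |F_ε(x)| ≤ D₁·ε^{n−2}. -/
set_option maxHeartbeats 1000000

open MeasureTheory

noncomputable section

/-- The bump function `f_ε` supported in the `ε`-caps around `±x₀`. -/
def fEps {n : ℕ} (x₀ : EuclideanSpace ℝ (Fin n)) (ε : ℝ) (x : EuclideanSpace ℝ (Fin n)) : ℝ :=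
  if ‖x - x₀‖ < ε then 2 * Real.exp (-(‖x - x₀‖ ^ 2 / (ε ^ 2 - ‖x - x₀‖ ^ 2)))
  else if ‖x + x₀‖ < ε then 2 * Real.exp (-(‖x + x₀‖ ^ 2 / (ε ^ 2 - ‖x + x₀‖ ^ 2)))
  else 0

/-- `F_ε(x) = π·|x|⁻¹·∫_{S^{n−1} ∩ (x/|x|)^⊥} f_ε(θ) dσ(θ)`, where `σ` is the
`(n−2)`-dimensional spherical (Hausdorff) measure on the great subsphere. -/
def FEps {n : ℕ} (x₀ : EuclideanSpace ℝ (Fin n)) (ε : ℝ) (x : EuclideanSpace ℝ (Fin n)) : ℝ :=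
  Real.pi * ‖x‖⁻¹ *
    ∫ θ in {θ : EuclideanSpace ℝ (Fin n) | ‖θ‖ = 1 ∧ (inner ℝ x θ : ℝ) = 0},
      fEps x₀ ε θ ∂(μH[(n : ℝ) - 2])

open Metric Set Module
open scoped RealInnerProductSpace ENNReal

variable {n : ℕ}

/-- Hausdorff measure of the unit ball in dimension `m`. -/
def kappa (m : ℕ) : ℝ≥0∞ := μH[(m:ℝ)] (closedBall (0 : EuclideanSpace ℝ (Fin m)) 1)

instance haarHM (m : ℕ) :
    ((μH[(m:ℝ)] : Measure (EuclideanSpace ℝ (Fin m)))).IsAddHaarMeasure := by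
  have h := isAddHaarMeasure_hausdorffMeasure (E := EuclideanSpace ℝ (Fin m))
  rwa [finrank_euclideanSpace_fin] at h

lemma kappa_lt_top (m : ℕ) : kappa m < ⊤ :=
  (isCompact_closedBall _ _).measure_lt_top

lemma hm_closedBall (m : ℕ) (w : EuclideanSpace ℝ (Fin m)) {r : ℝ} (hr : 0 ≤ r) :
    μH[(m:ℝ)] (closedBall w r) = ENNReal.ofReal (r ^ m) * kappa m := by
  have := Measure.addHaar_closedBall' (μ := (μH[(m:ℝ)] : Measure (EuclideanSpace ℝ (Fin m)))) w hr
  rwa [finrank_euclideanSpace_fin] at this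

lemma sqrt_aux_mono {c a b : ℝ} (hc : 0 < c) (ha0 : 0 ≤ a)
    (hb : b^2 ≤ 1 - c^2) (hab : a ≤ b) :
    Real.sqrt (1-a^2) - Real.sqrt (1-b^2) ≤ c⁻¹ * (b - a) := by
  have hb0 : 0 ≤ b := le_trans ha0 hab
  have ha : a^2 ≤ 1 - c^2 := by nlinarith
  have h1a : 0 ≤ 1 - a^2 := by nlinarith
  have h1b : 0 ≤ 1 - b^2 := by nlinarith
  set A := Real.sqrt (1-a^2) with hA
  set B := Real.sqrt (1-b^2) with hB
  have hA2 : A^2 = 1 - a^2 := Real.sq_sqrt h1a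
  have hB2 : B^2 = 1 - b^2 := Real.sq_sqrt h1b
  have hcA : c ≤ A := by
    have : c = Real.sqrt (c^2) := (Real.sqrt_sq hc.le).symm
    rw [this]; exact Real.sqrt_le_sqrt (by nlinarith)
  have hcB : c ≤ B := by
    have : c = Real.sqrt (c^2) := (Real.sqrt_sq hc.le).symm
    rw [this]; exact Real.sqrt_le_sqrt (by nlinarith)
  have ha1 : a ≤ 1 := by nlinarith
  have hb1 : b ≤ 1 := by nlinarith
  have key : (A - B) * (A + B) = (b - a) * (b + a) := by nlinarith
  have hBA : B ≤ A := by
    rw [hB, hA]; exact Real.sqrt_le_sqrt (by nlinarith)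
  have h2 : c * (A - B) ≤ b - a := by nlinarith [mul_nonneg (sub_nonneg.mpr hBA) hc.le, mul_nonneg (sub_nonneg.mpr hab) (by linarith : (0:ℝ) ≤ 2 - (b+a))]
  calc A - B = c⁻¹ * (c * (A - B)) := by field_simp
    _ ≤ c⁻¹ * (b - a) := mul_le_mul_of_nonneg_left h2 (by positivity)

lemma sqrt_aux {c a b : ℝ} (hc : 0 < c) (ha0 : 0 ≤ a) (hb0 : 0 ≤ b)
    (ha : a^2 ≤ 1 - c^2) (hb : b^2 ≤ 1 - c^2) :
    |Real.sqrt (1-a^2) - Real.sqrt (1-b^2)| ≤ c⁻¹ * |a - b| := by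
  rcases le_total a b with h | h
  · have hXY : Real.sqrt (1-b^2) ≤ Real.sqrt (1-a^2) := Real.sqrt_le_sqrt (by nlinarith)
    rw [abs_of_nonneg (sub_nonneg.mpr hXY), abs_sub_comm, abs_of_nonneg (sub_nonneg.mpr h)]
    exact sqrt_aux_mono hc ha0 hb h
  · have hXY : Real.sqrt (1-a^2) ≤ Real.sqrt (1-b^2) := Real.sqrt_le_sqrt (by nlinarith)
    rw [abs_sub_comm, abs_of_nonneg (sub_nonneg.mpr hXY), abs_of_nonneg (sub_nonneg.mpr h)]
    exact sqrt_aux_mono hc hb0 ha h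

lemma cap_bound (hn : 3 ≤ n) (x p : EuclideanSpace ℝ (Fin n))
    (hx : ‖x‖ = 1) (hp : ‖p‖ = 1) (hxp : ⟪x, p⟫ = 0)
    {c : ℝ} (hc : 0 < c) (hc1 : c ≤ 1) {r : ℝ} (hr : 0 ≤ r)
    {T : Set (EuclideanSpace ℝ (Fin n))}
    (hT : ∀ θ ∈ T, ‖θ‖ = 1 ∧ ⟪x, θ⟫ = 0 ∧ c ≤ ⟪θ, p⟫)
    (hdiam : ∀ θ ∈ T, ∀ θ' ∈ T, ‖θ - θ'‖ ≤ r) :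
    μH[(n:ℝ) - 2] T ≤
      (Real.toNNReal (1 + c⁻¹) : ℝ≥0∞) ^ (n - 2) * (ENNReal.ofReal (r ^ (n - 2)) * kappa (n - 2)) := by
  classical
  rcases T.eq_empty_or_nonempty with rfl | ⟨p', hp'T⟩
  · simp
  obtain ⟨hp'1, hp'x, hp'p⟩ := hT p' hp'T
  -- the subspace V
  set V : Submodule ℝ (EuclideanSpace ℝ (Fin n)) := (ℝ ∙ x)ᗮ ⊓ (ℝ ∙ p)ᗮ with hV
  have hx0 : x ≠ 0 := by intro h; rw [h, norm_zero] at hx; norm_num at hx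
  have hp0 : p ≠ 0 := by intro h; rw [h, norm_zero] at hp; norm_num at hp
  have hdim : finrank ℝ V = n - 2 := by
    rw [hV, Submodule.inf_orthogonal]
    have hbot : (ℝ ∙ x) ⊓ (ℝ ∙ p) = ⊥ := by
      rw [eq_bot_iff]
      rintro v ⟨hv1, hv2⟩
      obtain ⟨a, rfl⟩ := Submodule.mem_span_singleton.mp hv1
      obtain ⟨b, hb⟩ := Submodule.mem_span_singleton.mp hv2
      have h1 : ⟪x, a • x⟫ = a := by
        rw [real_inner_smul_right, real_inner_self_eq_norm_sq, hx]; ring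
      have h2 : ⟪x, b • p⟫ = 0 := by rw [real_inner_smul_right, hxp]; ring
      rw [← hb, h2] at h1
      simp [← h1]
    have hsup : finrank ℝ ((ℝ ∙ x) ⊔ (ℝ ∙ p) : Submodule ℝ (EuclideanSpace ℝ (Fin n))) = 2 := by
      have := Submodule.finrank_sup_add_finrank_inf_eq (ℝ ∙ x) (ℝ ∙ p)
      rw [hbot, finrank_span_singleton hx0, finrank_span_singleton hp0] at this
      simpa using this
    have := Submodule.finrank_add_finrank_orthogonal ((ℝ ∙ x) ⊔ (ℝ ∙ p))
    rw [hsup, finrank_euclideanSpace_fin] at this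
    omega
  -- membership of projections
  have memV : ∀ θ ∈ T, θ - ⟪θ, p⟫ • p ∈ V := by
    intro θ hθ
    obtain ⟨h1, h2, h3⟩ := hT θ hθ
    refine Submodule.mem_inf.mpr ⟨?_, ?_⟩
    · rw [Submodule.mem_orthogonal_singleton_iff_inner_right, inner_sub_right,
        real_inner_smul_right, h2, hxp]; ring
    · rw [Submodule.mem_orthogonal_singleton_iff_inner_right, inner_sub_right,
        real_inner_smul_right, real_inner_self_eq_norm_sq, hp, real_inner_comm]; ring
  have normV : ∀ θ ∈ T, ‖θ - ⟪θ, p⟫ • p‖ ^ 2 = 1 - ⟪θ, p⟫ ^ 2 := by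
    intro θ hθ
    obtain ⟨h1, h2, h3⟩ := hT θ hθ
    rw [norm_sub_sq_real, real_inner_smul_right, norm_smul, h1]
    simp [hp, real_inner_comm p θ]
    ring
  have normV_le : ∀ θ ∈ T, ‖θ - ⟪θ, p⟫ • p‖ ^ 2 ≤ 1 - c ^ 2 := by
    intro θ hθ
    obtain ⟨h1, h2, h3⟩ := hT θ hθ
    rw [normV θ hθ]
    nlinarith
  -- the isometry to Euclidean space
  set e : V ≃ₗᵢ[ℝ] EuclideanSpace ℝ (Fin (n - 2)) :=
    ((stdOrthonormalBasis ℝ V).reindex (finCongr hdim)).repr with he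
  set ρ : ℝ := Real.sqrt (1 - c ^ 2) with hρ
  set g : EuclideanSpace ℝ (Fin (n - 2)) → EuclideanSpace ℝ (Fin n) :=
    fun y => (e.symm y : EuclideanSpace ℝ (Fin n)) + Real.sqrt (1 - ‖y‖ ^ 2) • p with hg
  set w : EuclideanSpace ℝ (Fin (n - 2)) := e ⟨p' - ⟪p', p⟫ • p, memV p' hp'T⟩ with hw
  -- covering
  have hproj : ∀ u : EuclideanSpace ℝ (Fin n), ‖u - ⟪u, p⟫ • p‖ ≤ ‖u‖ := by
    intro u
    have hsq : ‖u - ⟪u, p⟫ • p‖ ^ 2 = ‖u‖ ^ 2 - ⟪u, p⟫ ^ 2 := by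
      rw [norm_sub_sq_real, real_inner_smul_right, norm_smul, hp]
      simp [real_inner_comm p u]
      ring
    nlinarith [norm_nonneg (u - ⟪u, p⟫ • p), norm_nonneg u, sq_nonneg ⟪u, p⟫]
  have hcover : T ⊆ g '' (closedBall w r ∩ closedBall 0 ρ) := by
    intro θ hθ
    obtain ⟨h1, h2, h3⟩ := hT θ hθ
    set vθ : V := ⟨θ - ⟪θ, p⟫ • p, memV θ hθ⟩ with hvθ
    refine ⟨e vθ, ⟨?_, ?_⟩, ?_⟩
    · rw [mem_closedBall, hw, dist_eq_norm, ← map_sub, e.norm_map, Submodule.coe_norm,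
        Submodule.coe_sub]
      have hrepr : (vθ : EuclideanSpace ℝ (Fin n)) -
          ((⟨p' - ⟪p', p⟫ • p, memV p' hp'T⟩ : V) : EuclideanSpace ℝ (Fin n)) =
          (θ - p') - ⟪θ - p', p⟫ • p := by
        simp only [hvθ, Submodule.coe_mk, inner_sub_left, sub_smul]
        abel
      rw [hrepr]
      exact le_trans (hproj (θ - p')) (hdiam θ hθ p' hp'T)
    · rw [mem_closedBall, dist_zero_right, e.norm_map]
      have hle : ‖vθ‖ ^ 2 ≤ 1 - c ^ 2 := by
        rw [Submodule.coe_norm]; exact normV_le θ hθ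
      have h0 : (0:ℝ) ≤ ‖vθ‖ := norm_nonneg _
      rw [hρ]
      nlinarith [Real.sqrt_nonneg (1 - c^2),
        Real.sqrt_le_sqrt (show ‖vθ‖^2 ≤ 1 - c^2 from hle), Real.sqrt_sq h0]
    · have hnv : ‖vθ‖ ^ 2 = 1 - ⟪θ, p⟫ ^ 2 := by
        rw [Submodule.coe_norm]; exact normV θ hθ
      have hsq : Real.sqrt (1 - ‖e vθ‖ ^ 2) = ⟪θ, p⟫ := by
        rw [e.norm_map, hnv, show (1:ℝ) - (1 - ⟪θ,p⟫^2) = ⟪θ,p⟫^2 by ring,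
          Real.sqrt_sq (by linarith : (0:ℝ) ≤ ⟪θ, p⟫)]
      show (e.symm (e vθ) : EuclideanSpace ℝ (Fin n)) + Real.sqrt (1 - ‖e vθ‖ ^ 2) • p = θ
      rw [hsq, e.symm_apply_apply]
      simp only [hvθ, Submodule.coe_mk]
      abel
  -- Lipschitz
  have hρc : ρ ^ 2 = 1 - c ^ 2 := Real.sq_sqrt (by nlinarith)
  have hlip : LipschitzOnWith (Real.toNNReal (1 + c⁻¹)) g (closedBall 0 ρ) := by
    apply LipschitzOnWith.of_dist_le_mul
    intro y hy y' hy'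
    rw [mem_closedBall, dist_zero_right] at hy hy'
    have hy2 : ‖y‖ ^ 2 ≤ 1 - c ^ 2 := by nlinarith [norm_nonneg y]
    have hy'2 : ‖y'‖ ^ 2 ≤ 1 - c ^ 2 := by nlinarith [norm_nonneg y']
    rw [dist_eq_norm, hg]
    have hgd : (e.symm y : EuclideanSpace ℝ (Fin n)) + Real.sqrt (1 - ‖y‖ ^ 2) • p -
        ((e.symm y' : EuclideanSpace ℝ (Fin n)) + Real.sqrt (1 - ‖y'‖ ^ 2) • p) =
        (e.symm (y - y') : EuclideanSpace ℝ (Fin n)) +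
          (Real.sqrt (1 - ‖y‖ ^ 2) - Real.sqrt (1 - ‖y'‖ ^ 2)) • p := by
      rw [map_sub, sub_smul]
      push_cast
      abel
    rw [hgd]
    have h1 : ‖(e.symm (y - y') : EuclideanSpace ℝ (Fin n))‖ = ‖y - y'‖ := by
      rw [← Submodule.coe_norm, e.symm.norm_map]
    calc ‖(e.symm (y - y') : EuclideanSpace ℝ (Fin n)) +
          (Real.sqrt (1 - ‖y‖ ^ 2) - Real.sqrt (1 - ‖y'‖ ^ 2)) • p‖
        ≤ ‖(e.symm (y - y') : EuclideanSpace ℝ (Fin n))‖ +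
          ‖(Real.sqrt (1 - ‖y‖ ^ 2) - Real.sqrt (1 - ‖y'‖ ^ 2)) • p‖ := norm_add_le _ _
      _ = ‖y - y'‖ + |Real.sqrt (1 - ‖y‖ ^ 2) - Real.sqrt (1 - ‖y'‖ ^ 2)| := by
          rw [h1, norm_smul, hp, Real.norm_eq_abs, mul_one]
      _ ≤ ‖y - y'‖ + c⁻¹ * |‖y‖ - ‖y'‖| := by
          have := sqrt_aux hc (norm_nonneg y) (norm_nonneg y') hy2 hy'2
          linarith
      _ ≤ ‖y - y'‖ + c⁻¹ * ‖y - y'‖ := by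
          have := abs_norm_sub_norm_le y y'
          have hci : (0:ℝ) ≤ c⁻¹ := by positivity
          nlinarith
      _ = (1 + c⁻¹) * ‖y - y'‖ := by ring
      _ = (Real.toNNReal (1 + c⁻¹) : ℝ) * dist y y' := by
          rw [dist_eq_norm, Real.coe_toNNReal _ (by positivity)]
  -- conclude
  have hd0 : (0:ℝ) ≤ (n:ℝ) - 2 := by
    have : (3:ℝ) ≤ (n:ℝ) := by exact_mod_cast hn
    linarith
  have hcast : (n:ℝ) - 2 = ((n - 2 : ℕ) : ℝ) := by
    have : (2:ℕ) ≤ n := by omega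
    push_cast [Nat.cast_sub this]
    ring
  calc μH[(n:ℝ) - 2] T ≤ μH[(n:ℝ) - 2] (g '' (closedBall w r ∩ closedBall 0 ρ)) :=
        measure_mono hcover
    _ ≤ (Real.toNNReal (1 + c⁻¹) : ℝ≥0∞) ^ ((n:ℝ) - 2) *
          μH[(n:ℝ) - 2] (closedBall w r ∩ closedBall 0 ρ) :=
        (hlip.mono inter_subset_right).hausdorffMeasure_image_le hd0
    _ ≤ (Real.toNNReal (1 + c⁻¹) : ℝ≥0∞) ^ ((n:ℝ) - 2) * μH[(n:ℝ) - 2] (closedBall w r) := by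
        gcongr
        exact inter_subset_left
    _ = (Real.toNNReal (1 + c⁻¹) : ℝ≥0∞) ^ (n - 2) * (ENNReal.ofReal (r ^ (n - 2)) * kappa (n - 2)) := by
        rw [hcast, ENNReal.rpow_natCast, hm_closedBall (n-2) w hr]

lemma sphere_cap_bound (hn : 3 ≤ n) (x : EuclideanSpace ℝ (Fin n)) (hx : ‖x‖ = 1)
    (y : EuclideanSpace ℝ (Fin n)) {ε : ℝ} (hε : 0 < ε) :
    μH[(n:ℝ) - 2] ({θ : EuclideanSpace ℝ (Fin n) | ‖θ‖ = 1 ∧ ⟪x, θ⟫ = 0} ∩ ball y ε) ≤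
      (2 * (n - 1) : ℕ) * ((Real.toNNReal (1 + (n:ℝ)) : ℝ≥0∞) ^ (n - 2) *
        (ENNReal.ofReal ((2 * ε) ^ (n - 2)) * kappa (n - 2))) := by
  classical
  have hx0 : x ≠ 0 := by intro h; rw [h, norm_zero] at hx; norm_num at hx
  set W : Submodule ℝ (EuclideanSpace ℝ (Fin n)) := (ℝ ∙ x)ᗮ with hW
  have hdimW : finrank ℝ W = n - 1 := by
    rw [hW]
    have := Submodule.finrank_add_finrank_orthogonal (ℝ ∙ x)
    rw [finrank_span_singleton hx0, finrank_euclideanSpace_fin] at this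
    omega
  set b := stdOrthonormalBasis ℝ W with hb
  set c : ℝ := (n:ℝ)⁻¹ with hc'
  have hn0 : (0:ℝ) < n := by positivity
  have hc : 0 < c := by positivity
  have hc1 : c ≤ 1 := by
    rw [hc']
    apply inv_le_one_of_one_le₀
    exact_mod_cast (by omega : 1 ≤ n)
  set pv : Fin (finrank ℝ W) × Bool → EuclideanSpace ℝ (Fin n) :=
    fun is => cond is.2 (b is.1 : EuclideanSpace ℝ (Fin n)) (-(b is.1)) with hpv
  set T : Fin (finrank ℝ W) × Bool → Set (EuclideanSpace ℝ (Fin n)) :=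
    fun is => ({θ | ‖θ‖ = 1 ∧ ⟪x, θ⟫ = 0} ∩ ball y ε) ∩ {θ | c ≤ ⟪θ, pv is⟫} with hTdef
  -- each pv is a unit vector orthogonal to x
  have hpv_norm : ∀ is, ‖pv is‖ = 1 := by
    rintro ⟨i, s⟩
    have : ‖(b i : EuclideanSpace ℝ (Fin n))‖ = 1 := by
      rw [← Submodule.coe_norm]; exact b.orthonormal.1 i
    cases s <;> simpa [hpv]
  have hpv_orth : ∀ is, ⟪x, pv is⟫ = 0 := by
    rintro ⟨i, s⟩
    have h1 : ((b i : W) : EuclideanSpace ℝ (Fin n)) ∈ (ℝ ∙ x)ᗮ := (b i).2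
    have h2 : ⟪x, ((b i : W) : EuclideanSpace ℝ (Fin n))⟫ = 0 :=
      Submodule.mem_orthogonal_singleton_iff_inner_right.mp h1
    cases s <;> simp [hpv, h2, inner_neg_right]
  -- covering
  have hcover : ({θ : EuclideanSpace ℝ (Fin n) | ‖θ‖ = 1 ∧ ⟪x, θ⟫ = 0} ∩ ball y ε) ⊆
      ⋃ is, T is := by
    rintro θ ⟨⟨hθ1, hθ2⟩, hθb⟩
    have hθW : θ ∈ W := Submodule.mem_orthogonal_singleton_iff_inner_right.mpr hθ2
    set θW : W := ⟨θ, hθW⟩ with hθWdef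
    have hsum : ∑ i, ⟪b i, θW⟫ ^ 2 = 1 := by
      have h := b.sum_inner_mul_inner θW θW
      have h2 : ⟪θW, θW⟫ = 1 := by
        rw [real_inner_self_eq_norm_sq, Submodule.coe_norm, Submodule.coe_mk, hθ1]; norm_num
      rw [h2] at h
      rw [← h]
      congr 1; ext i
      rw [real_inner_comm (b i) θW]; ring
    have hcard : (Fintype.card (Fin (finrank ℝ W)) : ℝ) = (n:ℝ) - 1 := by
      rw [Fintype.card_fin, hdimW]
      have : (1:ℕ) ≤ n := by omega
      push_cast [Nat.cast_sub this]
      ring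
    obtain ⟨i, hi⟩ : ∃ i, c ^ 2 ≤ ⟪b i, θW⟫ ^ 2 := by
      by_contra hcon
      push_neg at hcon
      have hlt : ∑ i, ⟪b i, θW⟫ ^ 2 < ∑ _i : Fin (finrank ℝ W), c ^ 2 :=
        Finset.sum_lt_sum_of_nonempty
          (Finset.univ_nonempty_iff.mpr ⟨⟨0, by omega⟩⟩) (fun i _ => hcon i)
      rw [Finset.sum_const, Finset.card_univ, nsmul_eq_mul, hsum] at hlt
      rw [hcard] at hlt
      have : ((n:ℝ) - 1) * c ^ 2 ≤ 1 := by
        rw [hc']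
        have h1 : ((n:ℝ))⁻¹ ≤ 1 := inv_le_one_of_one_le₀ (by exact_mod_cast (by omega : 1 ≤ n))
        have h2 : ((n:ℝ) - 1) * ((n:ℝ)⁻¹)^2 = (n:ℝ)⁻¹ - ((n:ℝ)⁻¹)^2 := by
          field_simp
        nlinarith [sq_nonneg ((n:ℝ)⁻¹)]
      linarith
    set t : ℝ := ⟪b i, θW⟫ with ht
    have habs : c ≤ |t| := by
      by_contra hcon
      push_neg at hcon
      nlinarith [abs_nonneg t, sq_abs t]
    have hinner : ⟪θ, ((b i : W) : EuclideanSpace ℝ (Fin n))⟫ = t := by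
      rw [real_inner_comm]
      exact (Submodule.coe_inner W (b i) θW).symm
    rcases le_or_gt 0 t with h | h
    · refine mem_iUnion.mpr ⟨(i, true), ⟨⟨hθ1, hθ2⟩, hθb⟩, ?_⟩
      show c ≤ ⟪θ, pv (i, true)⟫
      have hpf : pv (i, true) = ((b i : W) : EuclideanSpace ℝ (Fin n)) := rfl
      rw [hpf, hinner]
      rwa [abs_of_nonneg h] at habs
    · refine mem_iUnion.mpr ⟨(i, false), ⟨⟨hθ1, hθ2⟩, hθb⟩, ?_⟩
      show c ≤ ⟪θ, pv (i, false)⟫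
      have hpf : pv (i, false) = -((b i : W) : EuclideanSpace ℝ (Fin n)) := rfl
      rw [hpf, inner_neg_right, hinner]
      rwa [abs_of_neg h] at habs
    -- sum up
  calc μH[(n:ℝ) - 2] ({θ : EuclideanSpace ℝ (Fin n) | ‖θ‖ = 1 ∧ ⟪x, θ⟫ = 0} ∩ ball y ε)
      ≤ μH[(n:ℝ) - 2] (⋃ is, T is) := measure_mono hcover
    _ ≤ ∑ is, μH[(n:ℝ) - 2] (T is) := measure_iUnion_fintype_le _ _
    _ ≤ (Finset.univ : Finset (Fin (finrank ℝ W) × Bool)).card •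
          ((Real.toNNReal (1 + (n:ℝ)) : ℝ≥0∞) ^ (n - 2) *
            (ENNReal.ofReal ((2 * ε) ^ (n - 2)) * kappa (n - 2))) := by
        apply Finset.sum_le_card_nsmul
        rintro is -
        have := cap_bound hn x (pv is) hx (hpv_norm is) (hpv_orth is) hc hc1
          (r := 2 * ε) (by positivity) (T := T is)
          (fun θ hθ => ⟨hθ.1.1.1, hθ.1.1.2, hθ.2⟩)
          (fun θ hθ θ' hθ' => by
            have h1 : ‖θ - y‖ < ε := by
              have := mem_ball.mp hθ.1.2; rwa [dist_eq_norm] at this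
            have h2 : ‖θ' - y‖ < ε := by
              have := mem_ball.mp hθ'.1.2; rwa [dist_eq_norm] at this
            calc ‖θ - θ'‖ = ‖(θ - y) - (θ' - y)‖ := by rw [sub_sub_sub_cancel_right]
              _ ≤ ‖θ - y‖ + ‖θ' - y‖ := norm_sub_le _ _
              _ ≤ 2 * ε := by linarith)
        rw [hc', inv_inv] at this
        exact this
    _ = (2 * (n - 1) : ℕ) * ((Real.toNNReal (1 + (n:ℝ)) : ℝ≥0∞) ^ (n - 2) *
          (ENNReal.ofReal ((2 * ε) ^ (n - 2)) * kappa (n - 2))) := by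
        rw [Finset.card_univ, Fintype.card_prod, Fintype.card_fin, Fintype.card_bool, hdimW,
          nsmul_eq_mul]
        congr 1
        norm_cast
        ring

lemma fEps_abs_le (x₀ θ : EuclideanSpace ℝ (Fin n)) {ε : ℝ} (hε : 0 < ε) :
    |fEps x₀ ε θ| ≤ 2 := by
  unfold fEps
  split_ifs with h1 h2
  · have hpos : 0 < ε ^ 2 - ‖θ - x₀‖ ^ 2 := by nlinarith [norm_nonneg (θ - x₀)]
    have hle : Real.exp (-(‖θ - x₀‖ ^ 2 / (ε ^ 2 - ‖θ - x₀‖ ^ 2))) ≤ 1 := by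
      rw [Real.exp_le_one_iff]
      have : 0 ≤ ‖θ - x₀‖ ^ 2 / (ε ^ 2 - ‖θ - x₀‖ ^ 2) := by positivity
      linarith
    rw [abs_of_nonneg (by positivity)]
    linarith
  · have hpos : 0 < ε ^ 2 - ‖θ + x₀‖ ^ 2 := by nlinarith [norm_nonneg (θ + x₀)]
    have hle : Real.exp (-(‖θ + x₀‖ ^ 2 / (ε ^ 2 - ‖θ + x₀‖ ^ 2))) ≤ 1 := by
      rw [Real.exp_le_one_iff]
      have : 0 ≤ ‖θ + x₀‖ ^ 2 / (ε ^ 2 - ‖θ + x₀‖ ^ 2) := by positivity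
      linarith
    rw [abs_of_nonneg (by positivity)]
    linarith
  · norm_num

/-- Uniform bound `|F_ε(x)| ≤ D₁·ε^{n−2}` on the unit sphere. -/
theorem FEps_bound (n : ℕ) (hn : 3 ≤ n) :
    ∃ D₁ : ℝ, 0 < D₁ ∧
      ∀ x₀ : EuclideanSpace ℝ (Fin n), ‖x₀‖ = 1 →
      ∀ ε ∈ Set.Ioo (0 : ℝ) 1,
      ∀ x : EuclideanSpace ℝ (Fin n), ‖x‖ = 1 →
        |FEps x₀ ε x| ≤ D₁ * ε ^ (n - 2) := by
  classical
  set m := n - 2 with hm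
  set Creal : ℝ := ((2 * (n - 1) : ℕ) : ℝ) * ((1 + (n:ℝ)) ^ m * (2 ^ m * (kappa m).toReal)) with hCreal
  have hCreal0 : 0 ≤ Creal := by positivity
  refine ⟨Real.pi * 4 * Creal + 1, by positivity, ?_⟩
  intro x₀ hx₀ ε hε x hx
  obtain ⟨hε0, hε1⟩ := hε
  set S : Set (EuclideanSpace ℝ (Fin n)) := {θ | ‖θ‖ = 1 ∧ (inner ℝ x θ : ℝ) = 0} with hS
  set U : Set (EuclideanSpace ℝ (Fin n)) := ball x₀ ε ∪ ball (-x₀) ε with hU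
  have hSm : MeasurableSet S := by
    have h1 : IsClosed {θ : EuclideanSpace ℝ (Fin n) | ‖θ‖ = 1} :=
      isClosed_eq continuous_norm continuous_const
    have h2 : IsClosed {θ : EuclideanSpace ℝ (Fin n) | (inner ℝ x θ : ℝ) = 0} :=
      isClosed_eq (Continuous.inner continuous_const continuous_id) continuous_const
    exact (h1.inter h2).measurableSet
  have hUm : MeasurableSet U := (isOpen_ball.union isOpen_ball).measurableSet
  -- bound on the measure of S ∩ U
  set B : ℝ≥0∞ := (2 * (n - 1) : ℕ) * ((Real.toNNReal (1 + (n:ℝ)) : ℝ≥0∞) ^ m *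
    (ENNReal.ofReal ((2 * ε) ^ m) * kappa m)) with hB
  have hμU : μH[(n:ℝ) - 2] (S ∩ U) ≤ 2 * B := by
    have hd : S ∩ U = (S ∩ ball x₀ ε) ∪ (S ∩ ball (-x₀) ε) := by
      rw [hU, inter_union_distrib_left]
    rw [hd]
    calc μH[(n:ℝ) - 2] ((S ∩ ball x₀ ε) ∪ (S ∩ ball (-x₀) ε))
        ≤ μH[(n:ℝ) - 2] (S ∩ ball x₀ ε) + μH[(n:ℝ) - 2] (S ∩ ball (-x₀) ε) :=
          measure_union_le _ _
      _ ≤ B + B := by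
          gcongr
          · exact sphere_cap_bound hn x hx x₀ hε0
          · exact sphere_cap_bound hn x hx (-x₀) hε0
      _ = 2 * B := by ring
  have hBlt : (2 : ℝ≥0∞) * B < ⊤ := by
    rw [hB]
    refine ENNReal.mul_lt_top (by norm_num) ?_
    refine ENNReal.mul_lt_top (ENNReal.natCast_lt_top _) ?_
    refine ENNReal.mul_lt_top ?_ ?_
    · exact ENNReal.pow_lt_top ENNReal.coe_lt_top
    · exact ENNReal.mul_lt_top ENNReal.ofReal_lt_top (kappa_lt_top m)
  have hfin : μH[(n:ℝ) - 2] (S ∩ U) < ⊤ := lt_of_le_of_lt hμU hBlt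
  -- rewrite the integral
  have hfU : (fun θ => fEps x₀ ε θ) = U.indicator (fEps x₀ ε) := by
    funext θ
    by_cases hθ : θ ∈ U
    · rw [indicator_of_mem hθ]
    · rw [indicator_of_notMem hθ]
      rw [hU, mem_union] at hθ
      push_neg at hθ
      obtain ⟨h1, h2⟩ := hθ
      rw [mem_ball, dist_eq_norm] at h1 h2
      rw [sub_neg_eq_add] at h2
      unfold fEps
      rw [if_neg h1, if_neg h2]
  have hIeq : ∫ θ in S, fEps x₀ ε θ ∂(μH[(n : ℝ) - 2]) =
      ∫ θ in S ∩ U, fEps x₀ ε θ ∂(μH[(n : ℝ) - 2]) := by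
    conv_lhs => rw [show (fun θ => fEps x₀ ε θ) = U.indicator (fEps x₀ ε) from hfU]
    rw [setIntegral_indicator hUm]
  have hInorm : ‖∫ θ in S ∩ U, fEps x₀ ε θ ∂(μH[(n : ℝ) - 2])‖ ≤
      2 * (μH[(n:ℝ) - 2] (S ∩ U)).toReal := by
    apply norm_setIntegral_le_of_norm_le_const_ae' hfin
    filter_upwards with θ hθ
    rw [Real.norm_eq_abs]
    exact fEps_abs_le x₀ θ hε0
  -- toReal computation
  have htR : (μH[(n:ℝ) - 2] (S ∩ U)).toReal ≤ 2 * Creal * ε ^ m := by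
    have h1 : (μH[(n:ℝ) - 2] (S ∩ U)).toReal ≤ ((2 : ℝ≥0∞) * B).toReal :=
      ENNReal.toReal_mono hBlt.ne hμU
    refine h1.trans_eq ?_
    rw [hB, ENNReal.toReal_mul, ENNReal.toReal_mul, ENNReal.toReal_mul, ENNReal.toReal_mul,
      ENNReal.toReal_ofNat, ENNReal.toReal_natCast, ENNReal.toReal_pow, ENNReal.coe_toReal,
      Real.coe_toNNReal _ (by positivity), ENNReal.toReal_ofReal (by positivity)]
    rw [hCreal]
    rw [mul_pow]
    ring
  -- final bound
  have hIbound : |∫ θ in S, fEps x₀ ε θ ∂(μH[(n : ℝ) - 2])| ≤ 4 * Creal * ε ^ m := by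
    rw [hIeq, ← Real.norm_eq_abs]
    calc ‖∫ θ in S ∩ U, fEps x₀ ε θ ∂(μH[(n : ℝ) - 2])‖
        ≤ 2 * (μH[(n:ℝ) - 2] (S ∩ U)).toReal := hInorm
      _ ≤ 2 * (2 * Creal * ε ^ m) := by
          have := htR; nlinarith [ENNReal.toReal_nonneg (a := μH[(n:ℝ) - 2] (S ∩ U))]
      _ = 4 * Creal * ε ^ m := by ring
  have hFeq : |FEps x₀ ε x| = Real.pi * |∫ θ in S, fEps x₀ ε θ ∂(μH[(n : ℝ) - 2])| := by
    rw [FEps, hx, inv_one, mul_one, abs_mul, abs_of_nonneg Real.pi_nonneg]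
  rw [hFeq]
  calc Real.pi * |∫ θ in S, fEps x₀ ε θ ∂(μH[(n : ℝ) - 2])|
      ≤ Real.pi * (4 * Creal * ε ^ m) := by
        exact mul_le_mul_of_nonneg_left hIbound Real.pi_nonneg
    _ = Real.pi * 4 * Creal * ε ^ m := by ring
    _ ≤ (Real.pi * 4 * Creal + 1) * ε ^ m := by
        have hεm : 0 ≤ ε ^ m := by positivity
        nlinarith
end
end

section
/- Let n ≥ 2 and let k ≥ 0 be an integer. There exists a constant C_k > 0, independent of x₀ and ε, such that for every x₀ ∈ S^{n−1}, every ε ∈ (0,1), every index 1 ≤ i ≤ n, and every x ∈ ℝⁿ with |x| = 1, the degree-0 homogeneous extension h_ε(x) = f_ε(x/|x|) satisfies |∂^k h_ε/∂x_i^k(x)| ≤ C_k·ε^{−k}. -/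
open MeasureTheory

noncomputable section

/-- The partial derivative operator `∂/∂xᵢ`. -/
def partialDeriv {n : ℕ} (i : Fin n) (f : EuclideanSpace ℝ (Fin n) → ℝ) :
    EuclideanSpace ℝ (Fin n) → ℝ :=
  fun x => fderiv ℝ f x (EuclideanSpace.single i 1)

namespace FEpsAux

variable {n : ℕ}

/-- The smooth profile function. -/
def F {n : ℕ} (z : EuclideanSpace ℝ (Fin n)) : ℝ :=
  2 * Real.exp 1 * expNegInvGlue (1 - ‖z‖ ^ 2)

lemma contDiff_F : ContDiff ℝ (⊤ : ℕ∞) (F (n := n)) :=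
  contDiff_const.mul (expNegInvGlue.contDiff.comp (contDiff_const.sub (contDiff_norm_sq ℝ)))

lemma hcs_F : HasCompactSupport (F (n := n)) := by
  apply HasCompactSupport.intro (isCompact_closedBall (0 : EuclideanSpace ℝ (Fin n)) 1)
  intro x hx
  have h1 : (1 : ℝ) < ‖x‖ := by
    simpa [Metric.mem_closedBall, dist_zero_right] using hx
  have h2 : 1 - ‖x‖ ^ 2 ≤ 0 := by nlinarith [norm_nonneg x]
  simp [F, expNegInvGlue.zero_of_nonpos h2]

lemma F_scaled {ε : ℝ} (hε : 0 < ε) (w : EuclideanSpace ℝ (Fin n)) :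
    F (ε⁻¹ • w) = if ‖w‖ < ε then 2 * Real.exp (-(‖w‖ ^ 2 / (ε ^ 2 - ‖w‖ ^ 2))) else 0 := by
  have hns : ‖ε⁻¹ • w‖ ^ 2 = ε⁻¹ ^ 2 * ‖w‖ ^ 2 := by
    rw [norm_smul]
    rw [Real.norm_eq_abs, abs_of_pos (inv_pos.2 hε)]
    ring
  by_cases h : ‖w‖ < ε
  · have hpos : 0 < ε ^ 2 - ‖w‖ ^ 2 := by nlinarith [norm_nonneg w]
    have harg : (0:ℝ) < 1 - ‖ε⁻¹ • w‖ ^ 2 := by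
      rw [hns]
      have : ε⁻¹ ^ 2 * ‖w‖ ^ 2 < ε⁻¹ ^ 2 * ε ^ 2 := by
        apply mul_lt_mul_of_pos_left _ (by positivity)
        nlinarith [norm_nonneg w]
      have h2 : ε⁻¹ ^ 2 * ε ^ 2 = 1 := by field_simp
      linarith
    rw [if_pos h, F, expNegInvGlue, if_neg (not_le.2 harg)]
    rw [show (2:ℝ) * Real.exp 1 * Real.exp (-(1 - ‖ε⁻¹ • w‖ ^ 2)⁻¹)
        = 2 * Real.exp (1 + -(1 - ‖ε⁻¹ • w‖ ^ 2)⁻¹) by rw [Real.exp_add]; ring]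
    congr 1
    congr 1
    rw [hns]
    have hε2 : (ε:ℝ) ^ 2 ≠ 0 := by positivity
    field_simp
    ring
  · rw [if_neg h, F]
    have harg : 1 - ‖ε⁻¹ • w‖ ^ 2 ≤ 0 := by
      rw [hns]
      have hw : ε ≤ ‖w‖ := not_lt.1 h
      have : ε⁻¹ ^ 2 * ε ^ 2 ≤ ε⁻¹ ^ 2 * ‖w‖ ^ 2 := by
        apply mul_le_mul_of_nonneg_left _ (by positivity)
        nlinarith
      have h2 : ε⁻¹ ^ 2 * ε ^ 2 = 1 := by field_simp
      linarith
    rw [expNegInvGlue.zero_of_nonpos harg, mul_zero]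

lemma fEps_eq {x₀ : EuclideanSpace ℝ (Fin n)} (hx₀ : ‖x₀‖ = 1) {ε : ℝ}
    (hε : ε ∈ Set.Ioo (0:ℝ) 1) (x : EuclideanSpace ℝ (Fin n)) :
    fEps x₀ ε x = F (ε⁻¹ • (x - x₀)) + F (ε⁻¹ • (x + x₀)) := by
  obtain ⟨hε0, hε1⟩ := hε
  rw [F_scaled hε0, F_scaled hε0]
  have hdisj : ¬ (‖x - x₀‖ < ε ∧ ‖x + x₀‖ < ε) := by
    rintro ⟨h1, h2⟩
    have : (2:ℝ) = ‖(x + x₀) - (x - x₀)‖ := by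
      rw [show (x + x₀) - (x - x₀) = (2:ℝ) • x₀ by module]
      rw [norm_smul, hx₀]
      norm_num
    have hle := norm_sub_le (x + x₀) (x - x₀)
    linarith
  unfold fEps
  by_cases h1 : ‖x - x₀‖ < ε
  · have h2 : ¬ ‖x + x₀‖ < ε := fun h2 => hdisj ⟨h1, h2⟩
    simp [h1, h2]
  · by_cases h2 : ‖x + x₀‖ < ε
    · simp [h1, h2]
    · simp [h1, h2]

/-- The smooth cutoff `χ`. -/
def chi {n : ℕ} (y : EuclideanSpace ℝ (Fin n)) : ℝ :=
  Real.smoothTransition (4 * ‖y‖ ^ 2 - 2)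

/-- Smooth positive function equal to `‖y‖` near the sphere. -/
def psi {n : ℕ} (y : EuclideanSpace ℝ (Fin n)) : ℝ := 1 + chi y * (‖y‖ - 1)

/-- Globally smooth replacement for the radial projection. -/
def gproj {n : ℕ} (y : EuclideanSpace ℝ (Fin n)) : EuclideanSpace ℝ (Fin n) :=
  (psi y)⁻¹ • y

lemma psi_pos (y : EuclideanSpace ℝ (Fin n)) : 0 < psi y := by
  rcases le_or_gt (‖y‖ ^ 2) (1/2) with h | h
  · have hz : chi y = 0 := by
      unfold chi
      exact Real.smoothTransition.zero_of_nonpos (by linarith)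
    simp [psi, hz]
  · have hy : (1:ℝ)/2 < ‖y‖ := by nlinarith [norm_nonneg y]
    have h0 := Real.smoothTransition.nonneg (4 * ‖y‖ ^ 2 - 2)
    have h1 := Real.smoothTransition.le_one (4 * ‖y‖ ^ 2 - 2)
    unfold psi chi
    rcases le_or_gt 1 (‖y‖) with h2 | h2
    · nlinarith
    · nlinarith

lemma psi_eq {y : EuclideanSpace ℝ (Fin n)} (h : (3:ℝ)/4 ≤ ‖y‖ ^ 2) : psi y = ‖y‖ := by
  have hz : chi y = 1 := by
    unfold chi
    exact Real.smoothTransition.one_of_one_le (by linarith)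
  simp [psi, hz]

lemma contDiff_psi : ContDiff ℝ (⊤ : ℕ∞) (psi (n := n)) := by
  rw [contDiff_iff_contDiffAt]
  intro y
  rcases lt_or_ge (‖y‖ ^ 2) (1/2) with h | h
  · have hU : IsOpen {z : EuclideanSpace ℝ (Fin n) | ‖z‖ ^ 2 < 1/2} :=
      isOpen_lt (continuous_norm.pow 2) continuous_const
    have hev : psi =ᶠ[nhds y] (fun _ => (1:ℝ)) := by
      filter_upwards [hU.mem_nhds h] with z hz
      have hz2 : ‖z‖ ^ 2 < 1/2 := hz
      have hz0 : chi z = 0 := by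
        unfold chi
        exact Real.smoothTransition.zero_of_nonpos (by linarith)
      simp [psi, hz0]
    exact contDiffAt_const.congr_of_eventuallyEq hev
  · have hy : y ≠ 0 := by
      intro h0
      rw [h0] at h
      simp at h
      linarith
    have hchi : ContDiff ℝ (⊤ : ℕ∞) (chi (n := n)) :=
      Real.smoothTransition.contDiff.comp
        ((contDiff_const.mul (contDiff_norm_sq ℝ)).sub contDiff_const)
    exact contDiffAt_const.add
      (hchi.contDiffAt.mul ((contDiffAt_norm ℝ hy).sub contDiffAt_const))

lemma contDiff_gproj : ContDiff ℝ (⊤ : ℕ∞) (gproj (n := n)) :=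
  (contDiff_psi.inv fun y => (psi_pos y).ne').smul contDiff_id

lemma gproj_eq {y : EuclideanSpace ℝ (Fin n)} (h : (3:ℝ)/4 ≤ ‖y‖ ^ 2) :
    gproj y = ‖y‖⁻¹ • y := by rw [gproj, psi_eq h]

lemma partialDeriv_iterate_eq (i : Fin n) :
    ∀ (k : ℕ) (f : EuclideanSpace ℝ (Fin n) → ℝ), ContDiff ℝ (⊤ : ℕ∞) f →
      ∀ x, (partialDeriv i)^[k] f x
        = iteratedFDeriv ℝ k f x (fun _ => EuclideanSpace.single i 1)
  | 0, f, _, x => by simp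
  | (k+1), f, hf, x => by
      have hfd : ContDiff ℝ (⊤ : ℕ∞) (fderiv ℝ f) := hf.fderiv_right (by exact_mod_cast le_rfl)
      have hf' : ContDiff ℝ (⊤ : ℕ∞)
          (fun y => fderiv ℝ f y (EuclideanSpace.single i 1)) :=
        hfd.clm_apply contDiff_const
      rw [Function.iterate_succ_apply]
      rw [show (partialDeriv i) f = fun y => fderiv ℝ f y (EuclideanSpace.single i 1) from rfl]
      rw [partialDeriv_iterate_eq i k _ hf' x]
      rw [iteratedFDeriv_clm_apply_const_apply hfd (by exact_mod_cast le_top)]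
      rw [iteratedFDeriv_succ_apply_right]
      rfl

lemma partialDeriv_iterate_congr {U : Set (EuclideanSpace ℝ (Fin n))} (hU : IsOpen U)
    (i : Fin n) : ∀ (k : ℕ) {f g : EuclideanSpace ℝ (Fin n) → ℝ},
      (∀ y ∈ U, f y = g y) → ∀ x ∈ U,
      (partialDeriv i)^[k] f x = (partialDeriv i)^[k] g x
  | 0, f, g, h, x, hx => h x hx
  | (k+1), f, g, h, x, hx => by
      rw [Function.iterate_succ_apply, Function.iterate_succ_apply]
      refine partialDeriv_iterate_congr hU i k (fun y hy => ?_) x hx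
      unfold partialDeriv
      have hev : f =ᶠ[nhds y] g := Filter.eventuallyEq_of_mem (hU.mem_nhds hy) h
      rw [hev.fderiv_eq]

lemma exists_F_bound (k : ℕ) :
    ∃ C : ℝ, 0 < C ∧ ∀ i ≤ k, ∀ z : EuclideanSpace ℝ (Fin n),
      ‖iteratedFDeriv ℝ i (F (n := n)) z‖ ≤ C := by
  have H : ∀ j : ℕ, ∃ C : ℝ, ∀ z : EuclideanSpace ℝ (Fin n),
      ‖iteratedFDeriv ℝ j (F (n := n)) z‖ ≤ C := by
    intro j
    exact ((contDiff_F (n := n)).continuous_iteratedFDeriv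
      (by exact_mod_cast le_top)).bounded_above_of_compact_support (hcs_F.iteratedFDeriv j)
  induction k with
  | zero =>
    obtain ⟨C, hC⟩ := H 0
    refine ⟨max C 1, lt_of_lt_of_le one_pos (le_max_right _ _), ?_⟩
    intro i hi z
    interval_cases i
    exact (hC z).trans (le_max_left _ _)
  | succ k ih =>
    obtain ⟨C, hCpos, hC⟩ := ih
    obtain ⟨C', hC'⟩ := H (k+1)
    refine ⟨max C C', lt_of_lt_of_le hCpos (le_max_left _ _), ?_⟩
    intro i hi z
    rcases Nat.lt_succ_iff_lt_or_eq.1 (Nat.lt_succ_of_le hi) with h | h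
    · exact (hC i (Nat.lt_succ_iff.1 h) z).trans (le_max_left _ _)
    · subst h
      exact (hC' z).trans (le_max_right _ _)

lemma exists_gproj_bound (k : ℕ) :
    ∃ D : ℝ, 1 ≤ D ∧ ∀ i ≤ k, ∀ x : EuclideanSpace ℝ (Fin n), ‖x‖ = 1 →
      ‖iteratedFDeriv ℝ i (gproj (n := n)) x‖ ≤ D := by
  have H : ∀ j : ℕ, ∃ C : ℝ, ∀ x : EuclideanSpace ℝ (Fin n), ‖x‖ = 1 →
      ‖iteratedFDeriv ℝ j (gproj (n := n)) x‖ ≤ C := by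
    intro j
    obtain ⟨C, hC⟩ := (isCompact_sphere (0 : EuclideanSpace ℝ (Fin n)) 1
      ).exists_bound_of_continuousOn
      ((contDiff_gproj.continuous_iteratedFDeriv (by exact_mod_cast le_top)).continuousOn)
    exact ⟨C, fun x hx => hC x (by simpa [mem_sphere_zero_iff_norm] using hx)⟩
  induction k with
  | zero =>
    obtain ⟨C, hC⟩ := H 0
    refine ⟨max C 1, le_max_right _ _, ?_⟩
    intro i hi x hx
    interval_cases i
    exact (hC x hx).trans (le_max_left _ _)
  | succ k ih =>
    obtain ⟨C, hC1, hC⟩ := ih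
    obtain ⟨C', hC'⟩ := H (k+1)
    refine ⟨max C C', le_trans hC1 (le_max_left _ _), ?_⟩
    intro i hi x hx
    rcases Nat.lt_succ_iff_lt_or_eq.1 (Nat.lt_succ_of_le hi) with h | h
    · exact (hC i (Nat.lt_succ_iff.1 h) x hx).trans (le_max_left _ _)
    · subst h
      exact (hC' x hx).trans (le_max_right _ _)

lemma aff_deriv_bound {ε : ℝ} (hε0 : 0 < ε) (c : EuclideanSpace ℝ (Fin n)) :
    ∀ m : ℕ, 1 ≤ m → ∀ y : EuclideanSpace ℝ (Fin n),
      ‖iteratedFDeriv ℝ m (fun z => ε⁻¹ • z + c) y‖ ≤ (ε⁻¹) ^ m := by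
  have hfd : ∀ y : EuclideanSpace ℝ (Fin n),
      fderiv ℝ (fun z : EuclideanSpace ℝ (Fin n) => ε⁻¹ • z + c) y
        = ε⁻¹ • ContinuousLinearMap.id ℝ (EuclideanSpace ℝ (Fin n)) :=
    fun y => (((hasFDerivAt_id y).const_smul ε⁻¹).add_const c).fderiv
  intro m hm y
  match m, hm with
  | 1, _ =>
    rw [pow_one]
    apply ContinuousMultilinearMap.opNorm_le_bound (inv_nonneg.2 hε0.le)
    intro mvec
    rw [iteratedFDeriv_one_apply, hfd]
    simp only [ContinuousLinearMap.smul_apply, ContinuousLinearMap.id_apply, norm_smul,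
      Real.norm_eq_abs, abs_of_pos (inv_pos.2 hε0), Fin.prod_univ_one]
    exact le_rfl
  | (j+2), _ =>
    have hz : iteratedFDeriv ℝ (j+2) (fun z : EuclideanSpace ℝ (Fin n) => ε⁻¹ • z + c) y = 0 := by
      ext mvec
      rw [iteratedFDeriv_succ_apply_right]
      rw [show (fun y : EuclideanSpace ℝ (Fin n) =>
          fderiv ℝ (fun z : EuclideanSpace ℝ (Fin n) => ε⁻¹ • z + c) y)
        = fun _ => ε⁻¹ • ContinuousLinearMap.id ℝ (EuclideanSpace ℝ (Fin n)) from funext hfd]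
      rw [iteratedFDeriv_const_of_ne (Nat.succ_ne_zero j)]
      simp
    rw [hz]
    simp only [norm_zero]
    positivity

end FEpsAux

open FEpsAux in
/-- The `k`-th pure partial derivatives of the degree-0 homogeneous extension
`h_ε(x) = f_ε(x/|x|)` are bounded by `C_k·ε^{−k}` on the unit sphere,
with `C_k` independent of `x₀` and `ε`. -/
theorem fEps_iterated_deriv_bound (n : ℕ) (hn : 2 ≤ n) (k : ℕ) :
    ∃ C : ℝ, 0 < C ∧
      ∀ x₀ : EuclideanSpace ℝ (Fin n), ‖x₀‖ = 1 →
      ∀ ε ∈ Set.Ioo (0 : ℝ) 1, ∀ i : Fin n,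
      ∀ x : EuclideanSpace ℝ (Fin n), ‖x‖ = 1 →
        |((partialDeriv i)^[k] (fun y => fEps x₀ ε (‖y‖⁻¹ • y))) x| ≤ C * (ε ^ k)⁻¹ := by
  obtain ⟨C₁, hC₁pos, hC₁⟩ := exists_F_bound (n := n) k
  obtain ⟨D, hD1, hD⟩ := exists_gproj_bound (n := n) k
  refine ⟨(k.factorial : ℝ) * (2 * (k.factorial : ℝ) * C₁) * D ^ k, by positivity, ?_⟩
  intro x₀ hx₀ ε hε i x hx
  obtain ⟨hε0, hε1⟩ := hε
  -- agree with the globally smooth function near the sphere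
  have hUopen : IsOpen {y : EuclideanSpace ℝ (Fin n) | (3:ℝ)/4 < ‖y‖ ^ 2} :=
    isOpen_lt continuous_const (continuous_norm.pow 2)
  have hxU : x ∈ {y : EuclideanSpace ℝ (Fin n) | (3:ℝ)/4 < ‖y‖ ^ 2} := by
    simp only [Set.mem_setOf_eq, hx]
    norm_num
  have heq : ∀ y ∈ {y : EuclideanSpace ℝ (Fin n) | (3:ℝ)/4 < ‖y‖ ^ 2},
      (fun y => fEps x₀ ε (‖y‖⁻¹ • y)) y = (fEps x₀ ε ∘ gproj) y := by
    intro y hy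
    simp only [Set.mem_setOf_eq] at hy
    simp only [Function.comp_apply, gproj_eq hy.le]
  rw [partialDeriv_iterate_congr hUopen i k heq x hxU]
  -- smoothness
  have hfe : fEps x₀ ε = fun z => F (ε⁻¹ • (z - x₀)) + F (ε⁻¹ • (z + x₀)) :=
    funext (fEps_eq hx₀ ⟨hε0, hε1⟩)
  have haff : ∀ c : EuclideanSpace ℝ (Fin n),
      ContDiff ℝ (⊤ : ℕ∞) (fun z : EuclideanSpace ℝ (Fin n) => ε⁻¹ • z + c) :=
    fun c => (contDiff_id.const_smul ε⁻¹).add contDiff_const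
  have e1 : (fun z : EuclideanSpace ℝ (Fin n) => F (ε⁻¹ • (z - x₀)))
      = F ∘ fun z : EuclideanSpace ℝ (Fin n) => ε⁻¹ • z + (-(ε⁻¹ • x₀)) := by
    funext z
    simp only [Function.comp_apply]
    congr 1
    module
  have e2 : (fun z : EuclideanSpace ℝ (Fin n) => F (ε⁻¹ • (z + x₀)))
      = F ∘ fun z : EuclideanSpace ℝ (Fin n) => ε⁻¹ • z + (ε⁻¹ • x₀) := by
    funext z
    simp only [Function.comp_apply]
    congr 1
    module
  have hsmfe : ContDiff ℝ (⊤ : ℕ∞) (fEps x₀ ε) := by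
    rw [hfe, show (fun z : EuclideanSpace ℝ (Fin n) => F (ε⁻¹ • (z - x₀)) + F (ε⁻¹ • (z + x₀)))
      = (fun z => F (ε⁻¹ • (z - x₀))) + fun z => F (ε⁻¹ • (z + x₀)) from rfl, e1, e2]
    exact (contDiff_F.comp (haff _)).add (contDiff_F.comp (haff _))
  have hsmH : ContDiff ℝ (⊤ : ℕ∞) (fEps x₀ ε ∘ gproj) := hsmfe.comp contDiff_gproj
  rw [partialDeriv_iterate_eq i k _ hsmH x]
  -- bound on derivatives of `fEps x₀ ε`
  have key : ∀ j ≤ k, ∀ z : EuclideanSpace ℝ (Fin n),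
      ‖iteratedFDeriv ℝ j (fEps x₀ ε) z‖ ≤ 2 * (k.factorial : ℝ) * C₁ * (ε ^ k)⁻¹ := by
    intro j hj z
    have hterm : ∀ c : EuclideanSpace ℝ (Fin n),
        ‖iteratedFDeriv ℝ j (F ∘ fun z : EuclideanSpace ℝ (Fin n) => ε⁻¹ • z + c) z‖
          ≤ (j.factorial : ℝ) * C₁ * (ε⁻¹) ^ j :=
      fun c => norm_iteratedFDeriv_comp_le contDiff_F (haff c) (by exact_mod_cast le_top) z
        (fun m hm => hC₁ m (hm.trans hj) _)
        (fun m hm1 _ => aff_deriv_bound hε0 c m hm1 z)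
    have hadd : iteratedFDeriv ℝ j (fEps x₀ ε) z
        = iteratedFDeriv ℝ j (F ∘ fun z : EuclideanSpace ℝ (Fin n) => ε⁻¹ • z + (-(ε⁻¹ • x₀))) z
          + iteratedFDeriv ℝ j (F ∘ fun z : EuclideanSpace ℝ (Fin n) => ε⁻¹ • z + (ε⁻¹ • x₀)) z := by
      rw [hfe]
      rw [show (fun z : EuclideanSpace ℝ (Fin n) => F (ε⁻¹ • (z - x₀)) + F (ε⁻¹ • (z + x₀)))
        = fun z => (F ∘ fun z : EuclideanSpace ℝ (Fin n) => ε⁻¹ • z + (-(ε⁻¹ • x₀))) z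
            + (F ∘ fun z : EuclideanSpace ℝ (Fin n) => ε⁻¹ • z + (ε⁻¹ • x₀)) z by
          rw [← e1, ← e2]]
      exact iteratedFDeriv_add_apply'
        ((contDiff_F.comp (haff _)).contDiffAt.of_le (by exact_mod_cast le_top))
        ((contDiff_F.comp (haff _)).contDiffAt.of_le (by exact_mod_cast le_top))
    have h1 : ((j.factorial : ℝ)) ≤ (k.factorial : ℝ) := by
      exact_mod_cast Nat.factorial_le hj
    have h2 : (ε⁻¹) ^ j ≤ (ε ^ k)⁻¹ := by
      rw [inv_pow]
      rw [inv_le_inv₀ (by positivity) (by positivity)]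
      exact pow_le_pow_of_le_one hε0.le hε1.le hj
    have h3 : (j.factorial : ℝ) * C₁ * (ε⁻¹) ^ j ≤ (k.factorial : ℝ) * C₁ * (ε ^ k)⁻¹ := by
      apply mul_le_mul (mul_le_mul h1 le_rfl hC₁pos.le (by positivity)) h2 (by positivity)
        (by positivity)
    calc ‖iteratedFDeriv ℝ j (fEps x₀ ε) z‖
        ≤ ‖iteratedFDeriv ℝ j (F ∘ fun z : EuclideanSpace ℝ (Fin n)
              => ε⁻¹ • z + (-(ε⁻¹ • x₀))) z‖
          + ‖iteratedFDeriv ℝ j (F ∘ fun z : EuclideanSpace ℝ (Fin n)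
              => ε⁻¹ • z + (ε⁻¹ • x₀)) z‖ := by
          rw [hadd]; exact norm_add_le _ _
      _ ≤ (j.factorial : ℝ) * C₁ * (ε⁻¹) ^ j + (j.factorial : ℝ) * C₁ * (ε⁻¹) ^ j :=
          add_le_add (hterm _) (hterm _)
      _ ≤ 2 * (k.factorial : ℝ) * C₁ * (ε ^ k)⁻¹ := by linarith
  -- apply the composition bound
  have hgx : gproj x = x := by
    rw [gproj_eq (by rw [hx]; norm_num), hx]
    simp
  have hcomp : ‖iteratedFDeriv ℝ k (fEps x₀ ε ∘ gproj) x‖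
      ≤ (k.factorial : ℝ) * (2 * (k.factorial : ℝ) * C₁ * (ε ^ k)⁻¹) * D ^ k := by
    apply norm_iteratedFDeriv_comp_le hsmfe contDiff_gproj (by exact_mod_cast le_top) x
    · intro j hj
      rw [hgx]
      exact key j hj x
    · intro j hj1 hj2
      exact (hD j hj2 x hx).trans (le_self_pow₀ hD1 (by omega))
  have hle := (iteratedFDeriv ℝ k (fEps x₀ ε ∘ gproj) x).le_opNorm
    (fun _ => EuclideanSpace.single i (1:ℝ))
  have hprod : (∏ _j : Fin k, ‖EuclideanSpace.single i (1:ℝ)‖) = 1 := by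
    simp [EuclideanSpace.norm_single]
  rw [hprod, mul_one] at hle
  calc |(iteratedFDeriv ℝ k (fEps x₀ ε ∘ gproj) x) (fun _ => EuclideanSpace.single i (1:ℝ))|
      ≤ ‖iteratedFDeriv ℝ k (fEps x₀ ε ∘ gproj) x‖ := hle
    _ ≤ (k.factorial : ℝ) * (2 * (k.factorial : ℝ) * C₁ * (ε ^ k)⁻¹) * D ^ k := hcomp
    _ = (k.factorial : ℝ) * (2 * (k.factorial : ℝ) * C₁) * D ^ k * (ε ^ k)⁻¹ := by ring
end
end
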